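/- arXiv:math/0006093 — 2 statements merged into one kernel-verified Lean document; each statement's English description precedes it below -/
import Mathlib

section
/- (Existence part of the corollary to the Deflection Lemma.) Let V and W be real vector spaces, let (φ_μ)_{μ∈ℕ} and (ψ_μ)_{μ∈ℕ} be families of ℝ-linear maps from V to W with only finitely many nonzero members, and suppose zⁿ, zᵖ : ℤ → V satisfy the unperturbed model equation Σ_{μ∈ℕ} [ φ_μ(zⁿ(n−μ)) + ψ_μ(zᵖ(n−μ)) ] = 0 for all n ∈ ℤ. Let G : W → V be an ℝ-linear right inverse of φ₀ (i.e. φ₀ ∘ G = id_W), and let J : ℤ → W satisfy J(n) = 0 for all n < 0. Define D : ℤ → V recursively by D(n) = 0 for n < 0 and D(n) = G( J(n) − Σ_{μ≥1} (φ_μ + ψ_{μ−1})(D(n−μ)) ) for n ≥ 0. Then the deflected states z̃ⁿ(n) = zⁿ(n) + D(n) and z̃ᵖ(n) = zᵖ(n) + D(n−1) satisfy the perturbed model equation Σ_{μ∈ℕ} [ φ_μ(z̃ⁿ(n−μ)) + ψ_μ(z̃ᵖ(n−μ)) ] = J(n) for all n ∈ ℤ. -/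
/-- Existence part of the corollary to the Deflection Lemma: the deflection
defined by the recursion (via a right inverse `G` of `φ₀`) produces deflected
states solving the perturbed model equation. -/
theorem tlm_deflection_corollary_existence
    (V W : Type*) [AddCommGroup V] [Module ℝ V] [AddCommGroup W] [Module ℝ W]
    (φ ψ : ℕ → V →ₗ[ℝ] W)
    (hφ : {μ : ℕ | φ μ ≠ 0}.Finite) (hψ : {μ : ℕ | ψ μ ≠ 0}.Finite)
    (zn zp : ℤ → V)
    (hmodel : ∀ n : ℤ, ∑ᶠ μ : ℕ, (φ μ (zn (n - μ)) + ψ μ (zp (n - μ))) = 0)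
    (G : W →ₗ[ℝ] V) (hG : ∀ w : W, φ 0 (G w) = w)
    (J : ℤ → W) (hJ : ∀ n : ℤ, n < 0 → J n = 0)
    (D : ℤ → V)
    (hDneg : ∀ n : ℤ, n < 0 → D n = 0)
    (hDrec : ∀ n : ℤ, 0 ≤ n →
      D n = G (J n - ∑ᶠ μ : ℕ, (φ (μ + 1) + ψ μ) (D (n - (μ + 1))))) :
    ∀ n : ℤ,
      ∑ᶠ μ : ℕ, (φ μ (zn (n - μ) + D (n - μ)) + ψ μ (zp (n - μ) + D (n - μ - 1)))
        = J n := by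
  classical
  obtain ⟨N, hN⟩ : ∃ N : ℕ, ∀ μ : ℕ, N ≤ μ → φ μ = 0 ∧ ψ μ = 0 := by
    refine ⟨(hφ.toFinset ∪ hψ.toFinset).sup id + 1, fun μ hμ => ?_⟩
    constructor
    · by_contra h
      have hm : μ ∈ hφ.toFinset := hφ.mem_toFinset.2 h
      have hm' : μ ∈ hφ.toFinset ∪ hψ.toFinset := Finset.mem_union_left _ hm
      have := Finset.le_sup (f := id) hm'
      simp only [id] at this; omega
    · by_contra h
      have hm : μ ∈ hψ.toFinset := hψ.mem_toFinset.2 h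
      have hm' : μ ∈ hφ.toFinset ∪ hψ.toFinset := Finset.mem_union_right _ hm
      have := Finset.le_sup (f := id) hm'
      simp only [id] at this; omega
  have hsum : ∀ (f : ℕ → W), (∀ μ, N ≤ μ → f μ = 0) →
      ∑ᶠ μ, f μ = ∑ μ ∈ Finset.range (N + 1), f μ := by
    intro f hf
    refine finsum_eq_finset_sum_of_support_subset f ?_
    intro μ hμ
    simp only [Function.mem_support] at hμ
    simp only [Finset.coe_range, Set.mem_Iio]
    by_contra h
    exact hμ (hf μ (by omega))
  intro n
  have hmodel' : ∑ μ ∈ Finset.range (N + 1), (φ μ (zn (n - μ)) + ψ μ (zp (n - μ))) = 0 := by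
    rw [← hsum _ (fun μ hμ => by rw [(hN μ hμ).1, (hN μ hμ).2]; simp)]
    exact hmodel n
  have key : φ 0 (D n) + ∑ μ ∈ Finset.range N, (φ (μ + 1) + ψ μ) (D (n - (μ + 1))) = J n := by
    rcases lt_or_ge n 0 with hn | hn
    · rw [hDneg n hn, hJ n hn, map_zero]
      rw [Finset.sum_eq_zero, add_zero]
      intro μ _
      rw [hDneg _ (by omega), map_zero]
    · have hS : ∑ᶠ μ : ℕ, (φ (μ + 1) + ψ μ) (D (n - (μ + 1)))
          = ∑ μ ∈ Finset.range N, (φ (μ + 1) + ψ μ) (D (n - (μ + 1))) := by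
        refine finsum_eq_finset_sum_of_support_subset _ ?_
        intro μ hμ
        simp only [Function.mem_support] at hμ
        simp only [Finset.coe_range, Set.mem_Iio]
        by_contra h
        apply hμ
        rw [(hN (μ + 1) (by omega)).1, (hN μ (by omega)).2]; simp
      rw [hDrec n hn, hG, ← hS]
      abel
  rw [hsum _ (fun μ hμ => by rw [(hN μ hμ).1, (hN μ hμ).2]; simp)]
  have expand :
      ∑ μ ∈ Finset.range (N + 1),
          (φ μ (zn (n - μ) + D (n - μ)) + ψ μ (zp (n - μ) + D (n - μ - 1)))
        = (∑ μ ∈ Finset.range (N + 1), (φ μ (zn (n - μ)) + ψ μ (zp (n - μ))))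
          + ∑ μ ∈ Finset.range (N + 1), (φ μ (D (n - μ)) + ψ μ (D (n - μ - 1))) := by
    rw [← Finset.sum_add_distrib]
    refine Finset.sum_congr rfl fun μ _ => ?_
    simp only [map_add]; abel
  rw [expand, hmodel', zero_add]
  have split :
      ∑ μ ∈ Finset.range (N + 1), (φ μ (D (n - μ)) + ψ μ (D (n - μ - 1)))
        = φ 0 (D n) + ∑ μ ∈ Finset.range N, (φ (μ + 1) + ψ μ) (D (n - (μ + 1))) := by
    rw [Finset.sum_add_distrib, Finset.sum_range_succ' (fun μ => φ μ (D (n - μ))) N,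
        Finset.sum_range_succ (fun μ => ψ μ (D (n - μ - 1))) N,
        (hN N le_rfl).2]
    simp only [LinearMap.zero_apply, add_zero, LinearMap.add_apply, Nat.cast_zero, sub_zero,
      Finset.sum_add_distrib]
    have hc : ∀ μ : ℕ, n - (↑μ + 1) = n - ↑μ - 1 := by intro μ; ring
    push_cast
    simp only [hc]
    abel
  rw [split, key]
end

section
/- (Time-harmonic steady state of the TLM scattering process.) Let E and F be complex Banach spaces and let K : E → E, L : F → E, M : E → F, and N : F → F be continuous linear maps with ‖N‖ < 1. Fix θ ∈ ℝ and z₀ ∈ E, and consider the time-harmonic input z_in(n) = e^{iθn} z₀ for n ∈ ℤ. Then for every n ∈ ℤ the series z_out(n) = K(z_in(n)) + Σ_{μ=0}^∞ L(N^μ(M(z_in(n−μ−1)))) converges absolutely, and z_out(n) = e^{iθn} · S̃(z₀), where S̃ = K + L ∘ (e^{iθ}·id_F − N)⁻¹ ∘ M. -/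
/-!
Since `|e^{iθ}| = 1`, the input delayed by `μ + 1` steps is `e^{iθn} e^{-iθ(μ+1)} z₀`, so the
scattering series is `e^{iθn}` times `L (∑ e^{-iθ(μ+1)} N^μ) M z₀`. As `‖N‖ < 1 = |e^{iθ}|`, the
inner series is the Neumann series of the resolvent `(e^{iθ} - N)⁻¹`; absolute convergence
comes from the summable bound `‖L‖ ‖N^μ‖ ‖M‖ ‖z₀‖`.
-/

open Complex

theorem spectrum.hasSum_resolvent_of_norm_lt {𝕜 A : Type*} [NormedField 𝕜] [NormedRing A]
    [NormedAlgebra 𝕜 A] [HasSummableGeomSeries A] {a : A} {c : 𝕜} (h : ‖a‖ < ‖c‖) :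
    HasSum (fun n : ℕ => c⁻¹ ^ (n + 1) • a ^ n) (resolvent a c) := by
  have hc : c ≠ 0 := norm_pos_iff.mp ((norm_nonneg a).trans_lt h)
  have hsmall : ‖c⁻¹ • a‖ < 1 := calc
    ‖c⁻¹ • a‖ ≤ ‖c⁻¹‖ * ‖a‖ := norm_smul_le _ _
    _ = ‖a‖ / ‖c‖ := by rw [norm_inv, inv_mul_eq_div]
    _ < 1 := (div_lt_one (norm_pos_iff.mpr hc)).mpr h
  have hres : c • resolvent a c = Ring.inverse (1 - c⁻¹ • a) := by
    simpa [resolvent, Units.smul_def] using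
      spectrum.units_smul_resolvent_self (r := Units.mk0 c hc) (a := a)
  have := (hasSum_geom_series_inverse _ hsmall).const_smul c⁻¹
  rw [← hres, inv_smul_smul₀ hc] at this
  convert this using 2 with n
  rw [smul_pow, smul_smul, pow_succ']

theorem summable_norm_apply_pow_apply {𝕜 E F : Type*} [NontriviallyNormedField 𝕜]
    [NormedAddCommGroup E] [NormedSpace 𝕜 E] [NormedAddCommGroup F] [NormedSpace 𝕜 F]
    (L : F →L[𝕜] E) {N : F →L[𝕜] F} (hN : ‖N‖ < 1) {x : ℕ → F} {C : ℝ}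
    (hx : ∀ n, ‖x n‖ ≤ C) : Summable fun n => ‖L ((N ^ n) (x n))‖ := by
  refine .of_nonneg_of_le (fun _ => norm_nonneg _) (fun n => ?_)
    ((summable_norm_geometric_of_norm_lt_one hN).mul_left ‖L‖ |>.mul_right C)
  calc ‖L ((N ^ n) (x n))‖ ≤ ‖L‖ * ‖(N ^ n) (x n)‖ := L.le_opNorm _
    _ ≤ ‖L‖ * ‖N ^ n‖ * C := by
      rw [mul_assoc]; gcongr; exact (N ^ n).le_of_opNorm_le_of_le le_rfl (hx n)

theorem Complex.exp_int_sub_succ_mul (n : ℤ) (μ : ℕ) (z : ℂ) :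
    exp (((n - μ - 1 : ℤ) : ℂ) * z) = exp (n * z) * (exp z)⁻¹ ^ (μ + 1) := by
  rw [inv_pow, ← exp_nat_mul, ← exp_neg, ← exp_add]
  push_cast; ring_nf

theorem tlm_time_harmonic_steady_state_general
    (E F : Type*)
    [NormedAddCommGroup E] [NormedSpace ℂ E]
    [NormedAddCommGroup F] [NormedSpace ℂ F] [CompleteSpace F]
    (K : E →L[ℂ] E) (L : F →L[ℂ] E) (M : E →L[ℂ] F) (N : F →L[ℂ] F)
    (hN : ‖N‖ < 1) (θ : ℝ) (z₀ : E)
    (z_in : ℤ → E)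
    (hz : ∀ n : ℤ, z_in n = Complex.exp ((n : ℂ) * θ * Complex.I) • z₀) :
    ∀ n : ℤ,
      Summable (fun μ : ℕ => ‖L ((N ^ μ) (M (z_in (n - μ - 1))))‖) ∧
        K (z_in n) + ∑' μ : ℕ, L ((N ^ μ) (M (z_in (n - μ - 1))))
          = Complex.exp ((n : ℂ) * θ * Complex.I) •
              ((K + L ∘L Ring.inverse
                  (Complex.exp (θ * Complex.I) • (1 : F →L[ℂ] F) - N) ∘L M) z₀) := by
  intro n
  set c := exp (θ * I)
  set e := exp ((n : ℂ) * θ * I)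
  have hin : ∀ k : ℤ, ‖z_in k‖ = ‖z₀‖ := fun k => by
    rw [hz, norm_smul, show (k : ℂ) * θ * I = ((k * θ : ℝ) : ℂ) * I by push_cast; ring,
      norm_exp_ofReal_mul_I, one_mul]
  have hshift : ∀ μ : ℕ, z_in (n - μ - 1) = e • c⁻¹ ^ (μ + 1) • z₀ := fun μ => by
    rw [hz, mul_assoc, exp_int_sub_succ_mul, ← mul_assoc, mul_smul]
  refine ⟨summable_norm_apply_pow_apply L hN (C := ‖M‖ * ‖z₀‖)
    fun μ => (M.le_opNorm _).trans_eq (by rw [hin]), ?_⟩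
  have hres : HasSum (fun μ : ℕ => c⁻¹ ^ (μ + 1) • N ^ μ) (resolvent N c) :=
    spectrum.hasSum_resolvent_of_norm_lt (hN.trans_eq (norm_exp_ofReal_mul_I θ).symm)
  have hout : HasSum (fun μ : ℕ => e • L ((c⁻¹ ^ (μ + 1) • N ^ μ) (M z₀)))
      (e • L (resolvent N c (M z₀))) :=
    (L.hasSum ((ContinuousLinearMap.apply ℂ F (M z₀)).hasSum hres)).const_smul e
  have hterm : ∀ μ : ℕ,
      L ((N ^ μ) (M (z_in (n - μ - 1)))) = e • L ((c⁻¹ ^ (μ + 1) • N ^ μ) (M z₀)) := fun μ => by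
    simp only [hshift, map_smul, smul_apply]
  rw [tsum_congr hterm, hout.tsum_eq, hz, map_smul, ← smul_add, resolvent,
    Algebra.algebraMap_eq_smul_one]
  rfl

/-- Time-harmonic steady state of the TLM scattering process: for the input
`z_in(n) = e^{iθn} z₀` the scattering series converges absolutely and the
output equals `e^{iθn}` times the frequency-domain S-matrix applied to `z₀`. -/
theorem tlm_time_harmonic_steady_state
    (E F : Type*)
    [NormedAddCommGroup E] [NormedSpace ℂ E] [CompleteSpace E]
    [NormedAddCommGroup F] [NormedSpace ℂ F] [CompleteSpace F]
    (K : E →L[ℂ] E) (L : F →L[ℂ] E) (M : E →L[ℂ] F) (N : F →L[ℂ] F)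
    (hN : ‖N‖ < 1) (θ : ℝ) (z₀ : E)
    (z_in : ℤ → E)
    (hz : ∀ n : ℤ, z_in n = Complex.exp ((n : ℂ) * θ * Complex.I) • z₀) :
    ∀ n : ℤ,
      Summable (fun μ : ℕ => ‖L ((N ^ μ) (M (z_in (n - μ - 1))))‖) ∧
        K (z_in n) + ∑' μ : ℕ, L ((N ^ μ) (M (z_in (n - μ - 1))))
          = Complex.exp ((n : ℂ) * θ * Complex.I) •
              ((K + L ∘L Ring.inverse
                  (Complex.exp (θ * Complex.I) • (1 : F →L[ℂ] F) - N) ∘L M) z₀) :=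
  tlm_time_harmonic_steady_state_general E F K L M N hN θ z₀ z_in hz
end
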